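/- arXiv:2303.10751 — 2 statements merged into one kernel-verified Lean document; each statement's English description precedes it below -/
import Mathlib

section
/- Let L ⊆ L' be an extension of fields and let u ∈ L' be an element with u ∉ L. Let K' = L'(t) be the field of rational functions in one variable t over L', which contains K = L(t), and let v denote the t-adic valuation on K' (order of vanishing at t = 0), with valuation ring R' = L'[t]_{(t)} = {f ∈ K' : v(f) ≥ 0}. Let M be the 2×2 matrix [[t, 0], [u, t⁻¹]], which has determinant 1 and entries in K'. Then there is no 2×2 matrix B with entries in K and determinant 1 such that all four entries of the product M·B lie in R'. -/
open Polynomial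

/-- The `t`-adic valuation of a rational function: the order of vanishing at `t = 0` of the
numerator minus the order of vanishing at `t = 0` of the denominator. -/
noncomputable def tAdicVal {F : Type*} [Field F] (f : RatFunc F) : ℤ :=
  (rootMultiplicity 0 f.num : ℤ) - (rootMultiplicity 0 f.denom : ℤ)

/-- The inclusion `L(t) → L'(t)` of rational function fields induced by a field
extension `L ⊆ L'`, fixing the variable `t`. -/
noncomputable def ratFuncInclusion (L L' : Type*) [Field L] [Field L'] [Algebra L L'] :
    RatFunc L →+* RatFunc L' :=
  RatFunc.mapRingHom (Polynomial.mapRingHom (algebraMap L L')) (by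
    intro p hp
    rw [Submonoid.mem_comap]
    rw [mem_nonZeroDivisors_iff_ne_zero] at hp ⊢
    simpa using Polynomial.map_ne_zero (f := algebraMap L L') hp)

section Aux

variable {F : Type*} [Field F]

private lemma rm_zero_X : rootMultiplicity (0 : F) X = 1 := by
  simpa using rootMultiplicity_X_sub_C_self (x := (0 : F))

private lemma X_pow_rm_dvd (p : F[X]) : X ^ rootMultiplicity 0 p ∣ p := by
  simpa using pow_rootMultiplicity_dvd p 0

private lemma le_rm_iff {p : F[X]} (hp : p ≠ 0) {n : ℕ} :
    n ≤ rootMultiplicity 0 p ↔ X ^ n ∣ p := by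
  simpa using le_rootMultiplicity_iff hp (a := (0 : F)) (n := n)

private lemma mul_denom_eq_num (f : RatFunc F) :
    f * algebraMap F[X] (RatFunc F) f.denom = algebraMap F[X] (RatFunc F) f.num := by
  exact ((div_eq_iff (RatFunc.algebraMap_ne_zero (RatFunc.denom_ne_zero f))).mp
    (RatFunc.num_div_denom f)).symm

/-- The basic representation lemma: the `t`-adic valuation can be computed from any
fraction representation. -/
private lemma tAdicVal_rep {f : RatFunc F} {p q : F[X]} (hp : p ≠ 0) (hq : q ≠ 0)
    (h : f = algebraMap F[X] (RatFunc F) p / algebraMap F[X] (RatFunc F) q) :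
    tAdicVal f = (rootMultiplicity 0 p : ℤ) - rootMultiplicity 0 q := by
  have hf : f ≠ 0 := by
    rw [h]
    exact div_ne_zero (RatFunc.algebraMap_ne_zero hp) (RatFunc.algebraMap_ne_zero hq)
  have h1 := (RatFunc.num_div_denom f).trans h
  rw [div_eq_div_iff (RatFunc.algebraMap_ne_zero (RatFunc.denom_ne_zero f))
      (RatFunc.algebraMap_ne_zero hq), ← map_mul, ← map_mul] at h1
  have hcross : f.num * q = p * f.denom := RatFunc.algebraMap_injective F h1
  have hm1 : rootMultiplicity 0 (f.num * q)
      = rootMultiplicity 0 f.num + rootMultiplicity 0 q :=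
    rootMultiplicity_mul (mul_ne_zero (RatFunc.num_ne_zero hf) hq)
  have hm2 : rootMultiplicity 0 (p * f.denom)
      = rootMultiplicity 0 p + rootMultiplicity 0 f.denom :=
    rootMultiplicity_mul (mul_ne_zero hp (RatFunc.denom_ne_zero f))
  rw [hcross, hm2] at hm1
  unfold tAdicVal
  omega

private lemma tAdicVal_mul {f g : RatFunc F} (hf : f ≠ 0) (hg : g ≠ 0) :
    tAdicVal (f * g) = tAdicVal f + tAdicVal g := by
  have hrep : f * g = algebraMap F[X] (RatFunc F) (f.num * g.num) /
      algebraMap F[X] (RatFunc F) (f.denom * g.denom) := by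
    rw [map_mul, map_mul, eq_div_iff (mul_ne_zero
      (RatFunc.algebraMap_ne_zero (RatFunc.denom_ne_zero f))
      (RatFunc.algebraMap_ne_zero (RatFunc.denom_ne_zero g)))]
    linear_combination (g * algebraMap F[X] (RatFunc F) g.denom) * mul_denom_eq_num f +
      (algebraMap F[X] (RatFunc F) f.num) * mul_denom_eq_num g
  have h1 := tAdicVal_rep (mul_ne_zero (RatFunc.num_ne_zero hf) (RatFunc.num_ne_zero hg))
    (mul_ne_zero (RatFunc.denom_ne_zero f) (RatFunc.denom_ne_zero g)) hrep
  rw [rootMultiplicity_mul (mul_ne_zero (RatFunc.num_ne_zero hf) (RatFunc.num_ne_zero hg)),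
    rootMultiplicity_mul (mul_ne_zero (RatFunc.denom_ne_zero f) (RatFunc.denom_ne_zero g))]
    at h1
  unfold tAdicVal at *
  omega

private lemma tAdicVal_X : tAdicVal (RatFunc.X : RatFunc F) = 1 := by
  have hrep : (RatFunc.X : RatFunc F) = algebraMap F[X] (RatFunc F) X /
      algebraMap F[X] (RatFunc F) 1 := by
    rw [map_one, div_one, RatFunc.algebraMap_X]
  rw [tAdicVal_rep X_ne_zero one_ne_zero hrep, rm_zero_X,
    rootMultiplicity_eq_zero (by simp [IsRoot])]
  rfl

private lemma tAdicVal_ge_mul {f g : RatFunc F} {m n : ℤ}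
    (hf : f = 0 ∨ m ≤ tAdicVal f) (hg : g = 0 ∨ n ≤ tAdicVal g) :
    f * g = 0 ∨ m + n ≤ tAdicVal (f * g) := by
  rcases hf with rfl | hf
  · simp
  rcases hg with rfl | hg
  · simp
  by_cases hf0 : f = 0
  · simp [hf0]
  by_cases hg0 : g = 0
  · simp [hg0]
  right
  rw [tAdicVal_mul hf0 hg0]
  omega

private lemma tAdicVal_ge_add {f g : RatFunc F} {n : ℤ}
    (hf : f = 0 ∨ n ≤ tAdicVal f) (hg : g = 0 ∨ n ≤ tAdicVal g) :
    f + g = 0 ∨ n ≤ tAdicVal (f + g) := by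
  by_cases hf0 : f = 0
  · simpa [hf0] using hg
  by_cases hg0 : g = 0
  · simpa [hg0] using hf
  replace hf : n ≤ tAdicVal f := hf.resolve_left hf0
  replace hg : n ≤ tAdicVal g := hg.resolve_left hg0
  by_cases hfg : f + g = 0
  · exact Or.inl hfg
  right
  set p : F[X] := f.num * g.denom + f.denom * g.num with hp_def
  have hrep : f + g = algebraMap F[X] (RatFunc F) p /
      algebraMap F[X] (RatFunc F) (f.denom * g.denom) := by
    rw [hp_def, map_add, map_mul, map_mul, map_mul, eq_div_iff (mul_ne_zero
      (RatFunc.algebraMap_ne_zero (RatFunc.denom_ne_zero f))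
      (RatFunc.algebraMap_ne_zero (RatFunc.denom_ne_zero g)))]
    linear_combination (algebraMap F[X] (RatFunc F) g.denom) * mul_denom_eq_num f +
      (algebraMap F[X] (RatFunc F) f.denom) * mul_denom_eq_num g
  have hp0 : p ≠ 0 := by
    intro h0
    apply hfg
    rw [hrep, h0, map_zero, zero_div]
  have hmin : min (rootMultiplicity 0 (f.num * g.denom))
      (rootMultiplicity 0 (f.denom * g.num)) ≤ rootMultiplicity 0 p := by
    apply rootMultiplicity_add
    rw [← hp_def]; exact hp0
  rw [rootMultiplicity_mul (mul_ne_zero (RatFunc.num_ne_zero hf0) (RatFunc.denom_ne_zero g)),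
    rootMultiplicity_mul (mul_ne_zero (RatFunc.denom_ne_zero f) (RatFunc.num_ne_zero hg0))]
    at hmin
  have h1 := tAdicVal_rep hp0
    (mul_ne_zero (RatFunc.denom_ne_zero f) (RatFunc.denom_ne_zero g)) hrep
  rw [rootMultiplicity_mul (mul_ne_zero (RatFunc.denom_ne_zero f) (RatFunc.denom_ne_zero g))]
    at h1
  unfold tAdicVal at hf hg
  omega

private lemma tAdicVal_ge_neg {f : RatFunc F} {n : ℤ}
    (hf : f = 0 ∨ n ≤ tAdicVal f) : -f = 0 ∨ n ≤ tAdicVal (-f) := by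
  rcases hf with rfl | hf
  · simp
  by_cases hf0 : f = 0
  · simp [hf0]
  right
  have hrep : -f = algebraMap F[X] (RatFunc F) (-f.num) /
      algebraMap F[X] (RatFunc F) f.denom := by
    rw [map_neg, neg_div, RatFunc.num_div_denom]
  have h1 := tAdicVal_rep (neg_ne_zero.mpr (RatFunc.num_ne_zero hf0))
    (RatFunc.denom_ne_zero f) hrep
  have h2 : rootMultiplicity 0 (-f.num) = rootMultiplicity 0 f.num := by
    have : -f.num = C (-1) * f.num := by
      rw [map_neg, map_one, neg_one_mul]
    rw [this, rootMultiplicity_mul (by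
      rw [← this]; exact neg_ne_zero.mpr (RatFunc.num_ne_zero hf0)), rootMultiplicity_C,
      zero_add]
  rw [h1, h2]
  unfold tAdicVal at hf
  omega

end Aux


section Key

variable {L L' : Type*} [Field L] [Field L'] [Algebra L L']

private lemma incl_div (p q : L[X]) :
    ratFuncInclusion L L' (algebraMap L[X] (RatFunc L) p / algebraMap L[X] (RatFunc L) q) =
      algebraMap L'[X] (RatFunc L') (p.map (algebraMap L L')) /
        algebraMap L'[X] (RatFunc L') (q.map (algebraMap L L')) := by
  have hφ : nonZeroDivisors L[X] ≤
      Submonoid.comap (Polynomial.mapRingHom (algebraMap L L')) (nonZeroDivisors L'[X]) := by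
    intro p hp
    rw [Submonoid.mem_comap]
    rw [mem_nonZeroDivisors_iff_ne_zero] at hp ⊢
    simpa using Polynomial.map_ne_zero (f := algebraMap L L') hp
  unfold ratFuncInclusion
  rw [show ((RatFunc.mapRingHom (Polynomial.mapRingHom (algebraMap L L')) hφ :
      RatFunc L →+* RatFunc L') : RatFunc L → RatFunc L') = RatFunc.map _ hφ from rfl]
  rw [RatFunc.map_apply_div]
  simp

private lemma key_step {u : L'} (hu : u ∉ Set.range (algebraMap L L'))
    {f g : RatFunc L'} {p q r s : L[X]} (hq : q ≠ 0) (hs : s ≠ 0)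
    (hf : f = algebraMap L'[X] (RatFunc L') (p.map (algebraMap L L')) /
        algebraMap L'[X] (RatFunc L') (q.map (algebraMap L L')))
    (hg : g = algebraMap L'[X] (RatFunc L') (r.map (algebraMap L L')) /
        algebraMap L'[X] (RatFunc L') (s.map (algebraMap L L')))
    {n : ℤ} (hn : 0 ≤ n)
    (h : RatFunc.C u * f + g = 0 ∨ n ≤ tAdicVal (RatFunc.C u * f + g)) :
    (f = 0 ∨ n ≤ tAdicVal f) ∧ (g = 0 ∨ n ≤ tAdicVal g) := by
  have hσ : Function.Injective (algebraMap L L') := (algebraMap L L').injective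
  set p' := p.map (algebraMap L L') with hp'def
  set q' := q.map (algebraMap L L') with hq'def
  set r' := r.map (algebraMap L L') with hr'def
  set s' := s.map (algebraMap L L') with hs'def
  have hq' : q' ≠ 0 := Polynomial.map_ne_zero hq
  have hs' : s' ≠ 0 := Polynomial.map_ne_zero hs
  set T : L'[X] := Polynomial.C u * (p' * s') + r' * q' with hT
  set N : ℕ := n.toNat + rootMultiplicity 0 q' + rootMultiplicity 0 s' with hN
  have haq' : algebraMap L'[X] (RatFunc L') q' ≠ 0 := RatFunc.algebraMap_ne_zero hq'
  have has' : algebraMap L'[X] (RatFunc L') s' ≠ 0 := RatFunc.algebraMap_ne_zero hs'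
  have hsum : RatFunc.C u * f + g = algebraMap L'[X] (RatFunc L') T /
      algebraMap L'[X] (RatFunc L') (q' * s') := by
    rw [hf, hg, hT, ← RatFunc.algebraMap_C u, map_add, map_mul, map_mul, map_mul]
    field_simp
    rw [map_mul]
    ring
  have hcoeff : ∀ j < N, T.coeff j = 0 := by
    rcases h with h0 | hval
    · have hT0 : T = 0 := by
        rw [hsum] at h0
        have := (div_eq_zero_iff.mp h0).resolve_right
          (RatFunc.algebraMap_ne_zero (mul_ne_zero hq' hs'))
        exact RatFunc.algebraMap_injective L' (by rw [this, map_zero])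
      intro j _
      rw [hT0, Polynomial.coeff_zero]
    · by_cases hT0 : T = 0
      · intro j _
        rw [hT0, Polynomial.coeff_zero]
      · have hval2 := tAdicVal_rep hT0 (mul_ne_zero hq' hs') hsum
        rw [hval2, rootMultiplicity_mul (mul_ne_zero hq' hs')] at hval
        have hNle : N ≤ rootMultiplicity 0 T := by omega
        intro j hj
        exact X_pow_dvd_iff.mp (dvd_trans (pow_dvd_pow X hNle) (X_pow_rm_dvd T)) j hj
  have hPR : ∀ j < N, (p' * s').coeff j = 0 ∧ (r' * q').coeff j = 0 := by
    intro j hj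
    have hx : (p' * s').coeff j = algebraMap L L' ((p * s).coeff j) := by
      rw [hp'def, hs'def, ← Polynomial.map_mul, Polynomial.coeff_map]
    have hy : (r' * q').coeff j = algebraMap L L' ((r * q).coeff j) := by
      rw [hr'def, hq'def, ← Polynomial.map_mul, Polynomial.coeff_map]
    have h1 : u * (p' * s').coeff j + (r' * q').coeff j = 0 := by
      have h2 := hcoeff j hj
      rw [hT] at h2
      simpa [Polynomial.coeff_add, Polynomial.coeff_C_mul] using h2
    rw [hx, hy] at h1
    set x := (p * s).coeff j with hxdef
    set y := (r * q).coeff j with hydef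
    have hx0 : x = 0 := by
      by_contra hx0
      have hσx : algebraMap L L' x ≠ 0 := fun h0 => hx0 (hσ (by rw [h0, map_zero]))
      apply hu
      refine ⟨-y / x, ?_⟩
      rw [map_div₀, map_neg, eq_comm, eq_div_iff hσx]
      linear_combination h1
    have hy0 : y = 0 := by
      apply hσ
      rw [map_zero]
      rw [hx0, map_zero, mul_zero, zero_add] at h1
      exact h1
    rw [hx, hy, hx0, hy0, map_zero]
    exact ⟨rfl, rfl⟩
  constructor
  · by_cases hp : p = 0
    · left
      rw [hf, hp'def, hp, Polynomial.map_zero, map_zero, zero_div]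
    · right
      have hp' : p' ≠ 0 := Polynomial.map_ne_zero hp
      have hdvd : X ^ N ∣ (p' * s') := X_pow_dvd_iff.mpr (fun j hj => (hPR j hj).1)
      have hrm : N ≤ rootMultiplicity 0 (p' * s') :=
        (le_rm_iff (mul_ne_zero hp' hs')).mpr hdvd
      rw [rootMultiplicity_mul (mul_ne_zero hp' hs')] at hrm
      rw [tAdicVal_rep hp' hq' hf]
      omega
  · by_cases hr : r = 0
    · left
      rw [hg, hr'def, hr, Polynomial.map_zero, map_zero, zero_div]
    · right
      have hr' : r' ≠ 0 := Polynomial.map_ne_zero hr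
      have hdvd : X ^ N ∣ (r' * q') := X_pow_dvd_iff.mpr (fun j hj => (hPR j hj).2)
      have hrm : N ≤ rootMultiplicity 0 (r' * q') :=
        (le_rm_iff (mul_ne_zero hr' hq')).mpr hdvd
      rw [rootMultiplicity_mul (mul_ne_zero hr' hq')] at hrm
      rw [tAdicVal_rep hr' hs' hg]
      omega

end Key

/-- for an element `u ∈ L' \ L`, there is no matrix `B ∈ SL₂(L(t))` such that
all entries of `[[t, 0], [u, t⁻¹]] · B` have nonnegative `t`-adic valuation, i.e. lie in the
valuation ring `L'[t]_{(t)}`. -/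
theorem no_SL2_correction {L L' : Type*} [Field L] [Field L'] [Algebra L L']
    (u : L') (hu : u ∉ Set.range (algebraMap L L')) :
    ¬ ∃ B : Matrix (Fin 2) (Fin 2) (RatFunc L),
        B.det = 1 ∧
        ∀ i j : Fin 2,
          0 ≤ tAdicVal
            ((!![RatFunc.X, 0; RatFunc.C u, RatFunc.X⁻¹] *
              B.map (ratFuncInclusion L L')) i j) := by
  rintro ⟨B, hdet, hpos⟩
  set ι := ratFuncInclusion L L' with hι
  set B' := B.map ι with hB'
  have hent : ∀ j : Fin 2, (!![RatFunc.X, 0; RatFunc.C u, RatFunc.X⁻¹] * B') 1 j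
      = RatFunc.C u * B' 0 j + RatFunc.X⁻¹ * B' 1 j := by
    intro j
    rw [Matrix.mul_apply, Fin.sum_univ_two]
    simp
  have hcol : ∀ j : Fin 2,
      (RatFunc.X * B' 0 j = 0 ∨ 1 ≤ tAdicVal (RatFunc.X * B' 0 j)) ∧
      (B' 1 j = 0 ∨ 1 ≤ tAdicVal (B' 1 j)) := by
    intro j
    have h1 := hpos 1 j
    rw [hent j] at h1
    have ha' : B' 0 j = ι (B 0 j) := by rw [hB', Matrix.map_apply]
    have hc' : B' 1 j = ι (B 1 j) := by rw [hB', Matrix.map_apply]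
    have hfa : RatFunc.X * B' 0 j =
        algebraMap L'[X] (RatFunc L') ((X * (B 0 j).num).map (algebraMap L L')) /
        algebraMap L'[X] (RatFunc L') ((B 0 j).denom.map (algebraMap L L')) := by
      rw [ha']
      conv_lhs => rw [← RatFunc.num_div_denom (B 0 j)]
      rw [hι, incl_div, Polynomial.map_mul, Polynomial.map_X, map_mul, RatFunc.algebraMap_X,
        mul_div_assoc]
    have hgc : B' 1 j =
        algebraMap L'[X] (RatFunc L') ((B 1 j).num.map (algebraMap L L')) /
        algebraMap L'[X] (RatFunc L') ((B 1 j).denom.map (algebraMap L L')) := by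
      rw [hc']
      conv_lhs => rw [← RatFunc.num_div_denom (B 1 j)]
      rw [hι, incl_div]
    have hXE : RatFunc.X * (RatFunc.C u * B' 0 j + RatFunc.X⁻¹ * B' 1 j)
        = RatFunc.C u * (RatFunc.X * B' 0 j) + B' 1 j := by
      have hXinv : (RatFunc.X : RatFunc L') * RatFunc.X⁻¹ = 1 :=
        mul_inv_cancel₀ RatFunc.X_ne_zero
      calc RatFunc.X * (RatFunc.C u * B' 0 j + RatFunc.X⁻¹ * B' 1 j)
          = RatFunc.C u * (RatFunc.X * B' 0 j)
            + (RatFunc.X * RatFunc.X⁻¹) * B' 1 j := by ring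
        _ = _ := by rw [hXinv, one_mul]
    have hcond : RatFunc.C u * (RatFunc.X * B' 0 j) + B' 1 j = 0 ∨
        (1 : ℤ) ≤ tAdicVal (RatFunc.C u * (RatFunc.X * B' 0 j) + B' 1 j) := by
      rw [← hXE]
      by_cases hE0 : RatFunc.C u * B' 0 j + RatFunc.X⁻¹ * B' 1 j = 0
      · left
        rw [hE0, mul_zero]
      · right
        rw [tAdicVal_mul RatFunc.X_ne_zero hE0, tAdicVal_X]
        omega
    exact key_step hu (RatFunc.denom_ne_zero (B 0 j)) (RatFunc.denom_ne_zero (B 1 j))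
      hfa hgc (by norm_num) hcond
  have hdet' : B'.det = 1 := by
    have h := RingHom.map_det ι B
    rw [hdet, map_one, RingHom.mapMatrix_apply] at h
    rw [hB', ← h]
  rw [Matrix.det_fin_two] at hdet'
  have hfinal : (RatFunc.X : RatFunc L') =
      (RatFunc.X * B' 0 0) * B' 1 1 + -((RatFunc.X * B' 0 1) * B' 1 0) := by
    linear_combination -RatFunc.X * hdet'
  have hge : (RatFunc.X : RatFunc L') = 0 ∨
      (1 + 1 : ℤ) ≤ tAdicVal (RatFunc.X : RatFunc L') := by
    rw [hfinal]
    exact tAdicVal_ge_add (tAdicVal_ge_mul (hcol 0).1 (hcol 1).2)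
      (tAdicVal_ge_neg (tAdicVal_ge_mul (hcol 1).1 (hcol 0).2))
  rcases hge with h0 | h2
  · exact RatFunc.X_ne_zero h0
  · rw [tAdicVal_X] at h2
    omega
end

section
/- Let A be an abelian group (written multiplicatively), let v : A → ℤ be a surjective group homomorphism, and let Γ be a group acting on A by group automorphisms (written γ•a) such that v(γ•a) = v(a) for all γ ∈ Γ and a ∈ A. Fix n ≥ 1 and a group homomorphism φ : Γ → GL_n(ℤ), and let integer matrices M act on Aⁿ by the monomial action (M·λ)_i = ∏_j λ_j^{M_{ij}}. Suppose φ is nontrivial, i.e., there exists γ₀ ∈ Γ with φ(γ₀) ≠ 1. Let U = {μ ∈ Aⁿ : v(μ_i) = 0 for all i} and S = {ν ∈ Aⁿ : ν = φ(γ)·(γ•ν) for all γ ∈ Γ}, where γ acts on Aⁿ componentwise. Then there exists λ ∈ Aⁿ which cannot be written as a componentwise product λ = μ·ν with μ ∈ U and ν ∈ S. -/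
/-!
Read coordinatewise, the valuation is a homomorphism `Aⁿ → ℤⁿ` that kills `U`, is
surjective, and intertwines the monomial action with matrix multiplication; as it is
`Γ`-invariant, it maps `S` into the vectors fixed by every `φ(γ)`. Since `φ(γ₀) ≠ 1`, some
standard basis vector `e_j` is not fixed by `φ(γ₀)`, and any `λ` of valuation `e_j` lies
outside `U · S`.
-/

/-- The monomial action of an integer matrix `M` on `Aⁿ`, for `A` a multiplicative
abelian group: `(M · x)_i = ∏_j x_j ^ (M i j)`. -/
def monomialAct {A : Type*} [CommGroup A] {n : ℕ}
    (M : Matrix (Fin n) (Fin n) ℤ) (x : Fin n → A) : Fin n → A :=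
  fun i => ∏ j, x j ^ M i j

open Matrix

theorem Matrix.exists_mulVec_single_one_ne_of_ne_one {n R : Type*} [Fintype n] [DecidableEq n]
    [NonAssocSemiring R] {M : Matrix n n R} (hM : M ≠ 1) :
    ∃ j, M *ᵥ Pi.single j 1 ≠ Pi.single j 1 := by
  contrapose! hM
  exact ext_of_mulVec_single fun j => by rw [hM j, one_mulVec]

section Valuation

variable {A : Type*} [CommGroup A] {n : ℕ} (v : A →* Multiplicative ℤ)

def valVec (x : Fin n → A) : Fin n → ℤ :=
  fun i => (v (x i)).toAdd

theorem valVec_mul (x y : Fin n → A) : valVec v (x * y) = valVec v x + valVec v y := by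
  ext i
  simp [valVec]

theorem valVec_monomialAct (M : Matrix (Fin n) (Fin n) ℤ) (x : Fin n → A) :
    valVec v (monomialAct M x) = M *ᵥ valVec v x := by
  ext i
  simp [valVec, monomialAct, mulVec, dotProduct, toAdd_prod]

theorem valVec_surjective (hv : Function.Surjective v) :
    Function.Surjective (valVec v : (Fin n → A) → Fin n → ℤ) := fun e =>
  ⟨fun i => (hv (.ofAdd (e i))).choose, funext fun i => by simp [valVec, (hv _).choose_spec]⟩

theorem mulVec_valVec_eq_of_eq_monomialAct {Γ : Type*} [Group Γ] [MulDistribMulAction Γ A]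
    (hvinv : ∀ (γ : Γ) (a : A), v (γ • a) = v a) {γ : Γ} {M : Matrix (Fin n) (Fin n) ℤ}
    {ν : Fin n → A} (hν : ν = monomialAct M (fun i => γ • ν i)) :
    M *ᵥ valVec v ν = valVec v ν := by
  conv_rhs => rw [hν, valVec_monomialAct]
  congr 1
  ext i
  exact congrArg Multiplicative.toAdd (hvinv γ (ν i)).symm

theorem exists_ne_mul_of_ne_one (hv : Function.Surjective v)
    {M : Matrix (Fin n) (Fin n) ℤ} (hM : M ≠ 1) :
    ∃ lam : Fin n → A, ∀ μ ν : Fin n → A,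
      valVec v μ = 0 → M *ᵥ valVec v ν = valVec v ν → lam ≠ μ * ν := by
  obtain ⟨j, hj⟩ := Matrix.exists_mulVec_single_one_ne_of_ne_one hM
  obtain ⟨lam, hlam⟩ := valVec_surjective v hv (Pi.single j 1)
  refine ⟨lam, fun μ ν hμ hν hprod => hj ?_⟩
  have hνj : valVec v ν = Pi.single j 1 := by
    rw [← hlam, hprod, valVec_mul, hμ, zero_add]
  rwa [hνj] at hν

end Valuation

theorem exists_not_in_double_quotient_general {A Γ : Type*} [CommGroup A] [Group Γ]
    [MulDistribMulAction Γ A]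
    (v : A → ℤ) (hv : ∀ a b : A, v (a * b) = v a + v b)
    (hvsurj : Function.Surjective v)
    (hvinv : ∀ (γ : Γ) (a : A), v (γ • a) = v a)
    {n : ℕ} (φ : Γ →* Matrix.GeneralLinearGroup (Fin n) ℤ)
    (hφ : ∃ γ₀ : Γ, φ γ₀ ≠ 1) :
    ∃ lam : Fin n → A,
      ¬ ∃ μ ν : Fin n → A,
        (∀ i, v (μ i) = 0) ∧
        (∀ γ : Γ, ν = monomialAct (φ γ : Matrix (Fin n) (Fin n) ℤ) (fun i => γ • ν i)) ∧
        lam = μ * ν := by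
  obtain ⟨γ₀, hγ₀⟩ := hφ
  let V : A →* Multiplicative ℤ := MonoidHom.mk' (fun a => .ofAdd (v a)) (by simp [hv])
  have hVsurj : Function.Surjective V := fun e => (hvsurj e.toAdd).imp fun _ h => by simp [V, h]
  have hVinv : ∀ (γ : Γ) (a : A), V (γ • a) = V a := fun γ a => by simp [V, hvinv]
  have hM : (φ γ₀ : Matrix (Fin n) (Fin n) ℤ) ≠ 1 := fun h => hγ₀ (Units.ext h)
  obtain ⟨lam, hlam⟩ := exists_ne_mul_of_ne_one V hVsurj hM
  refine ⟨lam, fun ⟨μ, ν, hμ, hν, hprod⟩ => ?_⟩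
  exact hlam μ ν (funext hμ) (mulVec_valVec_eq_of_eq_monomialAct V hVinv (hν γ₀)) hprod

/-- if `φ : Γ → GL_n(ℤ)` is nontrivial, then there is an element of `Aⁿ`
which is not a product `μ * ν` with `μ` of componentwise valuation zero and `ν` in the
"twisted torus" point set `{ν : ν = φ(γ)·(γ • ν) for all γ}`. -/
theorem exists_not_in_double_quotient {A Γ : Type*} [CommGroup A] [Group Γ]
    [MulDistribMulAction Γ A]
    (v : A → ℤ) (hv : ∀ a b : A, v (a * b) = v a + v b)
    (hvsurj : Function.Surjective v)
    (hvinv : ∀ (γ : Γ) (a : A), v (γ • a) = v a)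
    {n : ℕ} (hn : 1 ≤ n) (φ : Γ →* Matrix.GeneralLinearGroup (Fin n) ℤ)
    (hφ : ∃ γ₀ : Γ, φ γ₀ ≠ 1) :
    ∃ lam : Fin n → A,
      ¬ ∃ μ ν : Fin n → A,
        (∀ i, v (μ i) = 0) ∧
        (∀ γ : Γ, ν = monomialAct (φ γ : Matrix (Fin n) (Fin n) ℤ) (fun i => γ • ν i)) ∧
        lam = μ * ν :=
  exists_not_in_double_quotient_general v hv hvsurj hvinv φ hφ
end
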